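/- arXiv:2101.00998 — 6 statements merged into one kernel-verified Lean document; each statement's English description precedes it below -/
import Mathlib

section
/- For every non-square positive integer k, there exist infinitely many pairs of positive integers (ξ, t) such that T_ξ = k·T_t. -/
def T (n : ℕ) : ℕ := n * (n + 1) / 2

private lemma two_T (n : ℕ) : 2 * T n = n * (n + 1) := by
  have h : 2 ∣ n * (n + 1) := (Nat.even_mul_succ_self n).two_dvd
  exact Nat.mul_div_cancel' h

/-- iterated Pell step -/
private def pSeq (k U V : ℕ) : ℕ → ℕ × ℕ
  | 0 => (1, 1)
  | n + 1 =>
    let p := pSeq k U V n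
    (U * p.1 + k * V * p.2, V * p.1 + U * p.2)

private lemma pSeq_inv (k U V : ℕ) (hUU : U * U = k * V * V + 1)
    (hUodd : U % 2 = 1) (hVeven : V % 2 = 0) (hV : 2 ≤ V) (hk : 2 ≤ k) :
    ∀ n, (pSeq k U V n).1 % 2 = 1 ∧ (pSeq k U V n).2 % 2 = 1 ∧
      (pSeq k U V n).1 * (pSeq k U V n).1 + k
        = k * ((pSeq k U V n).2 * (pSeq k U V n).2) + 1 ∧
      1 ≤ (pSeq k U V n).1 ∧ 1 ≤ (pSeq k U V n).2 := by
  intro n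
  induction n with
  | zero => simp [pSeq]; omega
  | succ n ih =>
    obtain ⟨h1, h2, h3, h4, h5⟩ := ih
    set X := (pSeq k U V n).1 with hX
    set Y := (pSeq k U V n).2 with hY
    have hst : pSeq k U V (n + 1) = (U * X + k * V * Y, V * X + U * Y) := rfl
    rw [hst]
    have hU1 : 1 ≤ U := by omega
    refine ⟨?_, ?_, ?_, ?_, ?_⟩
    · show (U * X + k * V * Y) % 2 = 1
      have e1 : (U * X) % 2 = 1 := by rw [Nat.mul_mod, hUodd, h1]
      have e2 : (k * V * Y) % 2 = 0 := by
        rw [Nat.mul_mod, Nat.mul_mod k V, hVeven]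
        simp
      omega
    · show (V * X + U * Y) % 2 = 1
      have e1 : (U * Y) % 2 = 1 := by rw [Nat.mul_mod, hUodd, h2]
      have e2 : (V * X) % 2 = 0 := by rw [Nat.mul_mod, hVeven]; simp
      omega
    · show (U * X + k * V * Y) * (U * X + k * V * Y) + k
        = k * ((V * X + U * Y) * (V * X + U * Y)) + 1
      have key : ((U * X + k * V * Y) : ℤ) * (U * X + k * V * Y) + k
          = k * ((V * X + U * Y) * (V * X + U * Y)) + 1 := by
        have hUU' : (U : ℤ) * U = k * V * V + 1 := by exact_mod_cast hUU
        have h3' : (X : ℤ) * X + k = k * (Y * Y) + 1 := by exact_mod_cast h3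
        linear_combination ((X : ℤ) * X - k * (Y * Y)) * hUU' + h3'
      exact_mod_cast key
    · show 1 ≤ U * X + k * V * Y
      have := Nat.mul_le_mul hU1 h4
      omega
    · show 1 ≤ V * X + U * Y
      have := Nat.mul_le_mul hU1 h5
      omega

theorem stmt_1 (k : ℕ) (hk : 0 < k) (hns : ¬ ∃ m : ℕ, m * m = k) :
    {p : ℕ × ℕ | 0 < p.1 ∧ 0 < p.2 ∧ T p.1 = k * T p.2}.Infinite := by
  have hk2 : 2 ≤ k := by
    by_contra h
    exact hns ⟨1, by omega⟩
  have hdns : ¬ IsSquare ((k : ℤ)) := by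
    rintro ⟨r, hr⟩
    refine hns ⟨r.natAbs, ?_⟩
    have : ((r.natAbs * r.natAbs : ℕ) : ℤ) = (k : ℤ) := by
      push_cast
      rw [abs_mul_abs_self]
      exact hr.symm
    exact_mod_cast this
  obtain ⟨x, y, hxy, hy0⟩ := Pell.exists_of_not_isSquare (d := (k : ℤ)) (by positivity) hdns
  set u := x.natAbs with hu
  set v := y.natAbs with hv
  have huu : u * u = k * (v * v) + 1 := by
    have : ((u * u : ℕ) : ℤ) = ((k * (v * v) + 1 : ℕ) : ℤ) := by
      push_cast
      rw [hu, hv, Int.natAbs_mul_self', Int.natAbs_mul_self']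
      linear_combination hxy
    exact_mod_cast this
  have hv1 : 1 ≤ v := Nat.pos_of_ne_zero (by simpa [hv, Int.natAbs_eq_zero] using hy0)
  have hu1 : 1 ≤ u := by
    rcases Nat.eq_zero_or_pos u with h | h
    · rw [h] at huu; simp at huu
    · exact h
  -- squared solution: U odd, V even
  set U := 2 * (k * (v * v)) + 1 with hU
  set V := 2 * (u * v) with hV
  have hUU : U * U = k * V * V + 1 := by
    have huu' : (u : ℤ) * u = k * (v * v) + 1 := by exact_mod_cast huu
    have : ((U * U : ℕ) : ℤ) = ((k * V * V + 1 : ℕ) : ℤ) := by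
      push_cast [hU, hV]
      linear_combination (-4 * (k : ℤ) * v * v) * huu'
    exact_mod_cast this
  have hkvv : 1 ≤ k * (v * v) := Nat.one_le_iff_ne_zero.mpr (by positivity)
  have hUodd : U % 2 = 1 := by omega
  have hVeven : V % 2 = 0 := by omega
  have hV2 : 2 ≤ V := by
    have : 1 ≤ u * v := Nat.mul_le_mul hu1 hv1
    omega
  have hU3 : 3 ≤ U := by omega
  have inv := pSeq_inv k U V hUU hUodd hVeven hV2 hk2
  -- strict growth of first coordinate
  have hgrow : ∀ n, (pSeq k U V n).1 + 2 ≤ (pSeq k U V (n + 1)).1 := by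
    intro n
    obtain ⟨_, _, _, h4, h5⟩ := inv n
    have hst : pSeq k U V (n + 1)
        = (U * (pSeq k U V n).1 + k * V * (pSeq k U V n).2,
           V * (pSeq k U V n).1 + U * (pSeq k U V n).2) := rfl
    rw [hst]
    have e1 : 3 * (pSeq k U V n).1 ≤ U * (pSeq k U V n).1 :=
      Nat.mul_le_mul_right _ hU3
    have e2 : 4 ≤ k * V := Nat.mul_le_mul hk2 hV2
    have e3 : k * V * 1 ≤ k * V * (pSeq k U V n).2 := Nat.mul_le_mul_left _ h5
    show (pSeq k U V n).1 + 2 ≤ U * (pSeq k U V n).1 + k * V * (pSeq k U V n).2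
    omega
  have hmono : StrictMono (fun n => (pSeq k U V n).1) :=
    strictMono_nat_of_lt_succ (fun n => by have := hgrow n; omega)
  set g : ℕ → ℕ × ℕ := fun n =>
    (((pSeq k U V (n + 1)).1 - 1) / 2, ((pSeq k U V (n + 1)).2 - 1) / 2) with hg
  apply Set.infinite_of_injective_forall_mem (f := g)
  · intro a b hab
    have h1 := (inv (a + 1)).1
    have h2 := (inv (b + 1)).1
    have e := congrArg Prod.fst hab
    simp only [hg] at e
    have hXeq : (pSeq k U V (a + 1)).1 = (pSeq k U V (b + 1)).1 := by omega
    by_contra hne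
    rcases Nat.lt_or_ge a b with h | h
    · exact absurd hXeq (Nat.ne_of_lt (hmono (by omega)))
    · exact absurd hXeq.symm (Nat.ne_of_lt (hmono (by omega)))
  · intro n
    obtain ⟨h1, h2, h3, h4, h5⟩ := inv (n + 1)
    have hX3 : 3 ≤ (pSeq k U V (n + 1)).1 := by
      have e1 : (pSeq k U V 0).1 + 2 ≤ (pSeq k U V 1).1 := hgrow 0
      have e0 : (pSeq k U V 0).1 = 1 := rfl
      have e2 : (pSeq k U V 1).1 ≤ (pSeq k U V (n + 1)).1 :=
        hmono.monotone (show 1 ≤ n + 1 by omega)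
      omega
    have hY3 : 3 ≤ (pSeq k U V (n + 1)).2 := by
      by_contra hY
      have hY1 : (pSeq k U V (n + 1)).2 = 1 := by omega
      rw [hY1] at h3
      have := Nat.mul_le_mul hX3 hX3
      omega
    obtain ⟨a, ha⟩ : ∃ a, (pSeq k U V (n + 1)).1 = 2 * a + 1 :=
      ⟨((pSeq k U V (n + 1)).1 - 1) / 2, by omega⟩
    obtain ⟨b, hb⟩ : ∃ b, (pSeq k U V (n + 1)).2 = 2 * b + 1 :=
      ⟨((pSeq k U V (n + 1)).2 - 1) / 2, by omega⟩
    have hga : g n = (a, b) := by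
      simp only [hg]
      rw [ha, hb]
      congr 1 <;> omega
    rw [hga]
    refine ⟨show 0 < a by omega, show 0 < b by omega, show T a = k * T b from ?_⟩
    rw [ha, hb] at h3
    have hab : a * (a + 1) = k * (b * (b + 1)) := by
      have h3' : (2 * (a : ℤ) + 1) * (2 * a + 1) + k = k * ((2 * b + 1) * (2 * b + 1)) + 1 := by
        exact_mod_cast h3
      have h4c : ((4 * (a * (a + 1)) : ℕ) : ℤ) = ((4 * (k * (b * (b + 1))) : ℕ) : ℤ) := by
        push_cast
        linear_combination h3'
      have h4' : 4 * (a * (a + 1)) = 4 * (k * (b * (b + 1))) := by exact_mod_cast h4c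
      omega
    have h2T : 2 * T a = 2 * (k * T b) := by
      calc 2 * T a = a * (a + 1) := two_T a
        _ = k * (b * (b + 1)) := hab
        _ = k * (2 * T b) := by rw [two_T b]
        _ = 2 * (k * T b) := by ring
    omega
end

section
/- Fix a natural number t and define sequences λ_n and ξ_n by λ₀ = 0, λ₁ = 1, λ_{n+1} = (4t+2)·λ_n − λ_{n−1}, and ξ₀ = 0, ξ₁ = t, ξ_{n+1} = (4t+2)·ξ_n − ξ_{n−1} + 2t. Then for all n, T_{ξ_n} = λ_n²·T_t. -/
def Tz (x : ℤ) : ℤ := x * (x + 1) / 2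

theorem stmt_10 (t : ℕ) (lam ξ : ℕ → ℤ)
    (hl0 : lam 0 = 0) (hl1 : lam 1 = 1)
    (hlrec : ∀ n, lam (n + 2) = (4 * t + 2) * lam (n + 1) - lam n)
    (hx0 : ξ 0 = 0) (hx1 : ξ 1 = t)
    (hxrec : ∀ n, ξ (n + 2) = (4 * t + 2) * ξ (n + 1) - ξ n + 2 * t) :
    ∀ n, Tz (ξ n) = (lam n)^2 * Tz (t : ℤ) := by
  have hinv : ∀ n, lam (n+1)^2 - (4*(t:ℤ)+2)*lam (n+1) * lam n + lam n ^2 = 1 := by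
    intro n
    induction n with
    | zero => simp [hl0, hl1]
    | succ k ih =>
      rw [hlrec k]
      linear_combination ih
  have hcl2 : ∀ n, (2 * ξ n + 1 = lam (n+1) - (2*(t:ℤ)+1) * lam n) ∧
      (2 * ξ (n+1) + 1 = lam (n+2) - (2*(t:ℤ)+1) * lam (n+1)) := by
    intro n
    induction n with
    | zero =>
      constructor
      · simp [hx0, hl0, hl1]
      · rw [hx1, hlrec 0, hl0, hl1]; ring
    | succ k ih =>
      refine ⟨ih.2, ?_⟩
      rw [hxrec k, hlrec (k+1)]
      linear_combination (4*(t:ℤ)+2) * ih.2 - ih.1 + (2*(t:ℤ)+1) * hlrec k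
  intro n
  have hcl := (hcl2 n).1
  have h4 : (4:ℤ) * (ξ n * (ξ n + 1)) = 4 * (lam n ^ 2 * ((t:ℤ) * ((t:ℤ)+1))) := by
    linear_combination ((2*ξ n + 1) + (lam (n+1) - (2*(t:ℤ)+1)*lam n)) * hcl + hinv n
  have hkey : ξ n * (ξ n + 1) = lam n ^ 2 * ((t:ℤ) * ((t:ℤ)+1)) :=
    mul_left_cancel₀ (by norm_num) h4
  obtain ⟨m, hm⟩ := Int.even_mul_succ_self (t:ℤ)
  simp only [Tz]
  rw [hkey, hm, show m + m = 2*m by ring,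
    show lam n ^ 2 * (2*m) = 2 * (lam n ^ 2 * m) by ring,
    Int.mul_ediv_cancel_left _ two_ne_zero, Int.mul_ediv_cancel_left _ two_ne_zero]
end

section
/- For k = 2: if t_{n} is defined by t₀ = 0, t₁ = 2, t_{n+1} = 6·t_n − t_{n−1} + 2, and ξ_n by ξ₀ = 0, ξ₁ = 3, ξ_{n+1} = 6·ξ_n − ξ_{n−1} + 2, then for all n, T_{ξ_n} = 2·T_{t_n}. -/
theorem stmt_13 (t ξ : ℕ → ℤ)
    (ht0 : t 0 = 0) (ht1 : t 1 = 2)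
    (htrec : ∀ n, t (n + 2) = 6 * t (n + 1) - t n + 2)
    (hx0 : ξ 0 = 0) (hx1 : ξ 1 = 3)
    (hxrec : ∀ n, ξ (n + 2) = 6 * ξ (n + 1) - ξ n + 2) :
    ∀ n, Tz (ξ n) = 2 * Tz (t n) := by
  have step : ∀ n, t (n + 1) = 3 * t n + 2 * ξ n + 2 ∧
      ξ (n + 1) = 4 * t n + 3 * ξ n + 3 := by
    intro n
    induction n with
    | zero => simp [ht0, ht1, hx0, hx1]
    | succ k ih =>
      obtain ⟨h1, h2⟩ := ih
      constructor
      · rw [htrec k, h1, h2]; ring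
      · rw [hxrec k, h1, h2]; ring
  have key : ∀ n, ξ n * (ξ n + 1) = 2 * (t n * (t n + 1)) := by
    intro n
    induction n with
    | zero => simp [ht0, hx0]
    | succ k ih =>
      obtain ⟨h1, h2⟩ := step k
      rw [h1, h2]
      nlinarith [ih]
  intro n
  have h := key n
  obtain ⟨m, hm⟩ := Int.even_mul_succ_self (t n)
  unfold Tz
  omega
end

section
/- For k = 3: if t_n is defined by t₀ = 0, t₁ = 1, t_{n+1} = 4·t_n − t_{n−1} + 1, and ξ_n by ξ₀ = 0, ξ₁ = 2, ξ_{n+1} = 4·ξ_n − ξ_{n−1} + 1, then for all n, T_{ξ_n} = 3·T_{t_n}. -/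
theorem stmt_14 (t ξ : ℕ → ℤ)
    (ht0 : t 0 = 0) (ht1 : t 1 = 1)
    (htrec : ∀ n, t (n + 2) = 4 * t (n + 1) - t n + 1)
    (hx0 : ξ 0 = 0) (hx1 : ξ 1 = 2)
    (hxrec : ∀ n, ξ (n + 2) = 4 * ξ (n + 1) - ξ n + 1) :
    ∀ n, Tz (ξ n) = 3 * Tz (t n) := by
  have key : ∀ n, (2 * ξ n + 1) ^ 2 = 3 * (2 * t n + 1) ^ 2 - 2 ∧
      (2 * ξ (n + 1) + 1) ^ 2 = 3 * (2 * t (n + 1) + 1) ^ 2 - 2 ∧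
      (2 * ξ (n + 1) + 1) * (2 * ξ n + 1) = 3 * (2 * t (n + 1) + 1) * (2 * t n + 1) - 4 := by
    intro n
    induction n with
    | zero => rw [ht0, ht1, hx0, hx1]; norm_num
    | succ k ih =>
      obtain ⟨h1, h2, h3⟩ := ih
      refine ⟨h2, ?_, ?_⟩ <;> rw [htrec k, hxrec k] <;> nlinarith [h1, h2, h3]
  intro n
  have h := (key n).1
  have hE : ξ n * (ξ n + 1) = 3 * (t n * (t n + 1)) := by nlinarith [h]
  have hd : (2 : ℤ) ∣ t n * (t n + 1) := (Int.even_mul_succ_self (t n)).two_dvd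
  unfold Tz
  rw [hE, Int.mul_ediv_assoc 3 hd]
end

section
/- For k = 5: if t_n is defined by t₀ = 0, t₁ = 2, t₂ = 6, t₃ = 44, and t_{n+4} = 18·t_{n+2} − t_n + 8, and ξ_n by ξ₀ = 0, ξ₁ = 5, ξ₂ = 14, ξ₃ = 99, and ξ_{n+4} = 18·ξ_{n+2} − ξ_n + 8, then for all n, T_{ξ_n} = 5·T_{t_n}. -/
theorem stmt_15 (t ξ : ℕ → ℤ)
    (ht0 : t 0 = 0) (ht1 : t 1 = 2) (ht2 : t 2 = 6) (ht3 : t 3 = 44)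
    (htrec : ∀ n, t (n + 4) = 18 * t (n + 2) - t n + 8)
    (hx0 : ξ 0 = 0) (hx1 : ξ 1 = 5) (hx2 : ξ 2 = 14) (hx3 : ξ 3 = 99)
    (hxrec : ∀ n, ξ (n + 4) = 18 * ξ (n + 2) - ξ n + 8) :
    ∀ n, Tz (ξ n) = 5 * Tz (t n) := by
  have key : ∀ n, ξ (n + 2) = 9 * ξ n + 20 * t n + 14 ∧
      t (n + 2) = 4 * ξ n + 9 * t n + 6 := by
    intro n
    induction n using Nat.strong_induction_on with
    | _ n ih =>
      match n with
      | 0 => rw [hx2, hx0, ht0, ht2]; norm_num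
      | 1 => rw [hx3, hx1, ht1, ht3]; norm_num
      | (m + 2) =>
        obtain ⟨h1, h2⟩ := ih m (by omega)
        constructor
        · rw [hxrec m, h1, h2]; ring
        · rw [htrec m, h1, h2]; ring
  have q : ∀ n, ξ n * (ξ n + 1) = 5 * (t n * (t n + 1)) := by
    intro n
    induction n using Nat.strong_induction_on with
    | _ n ih =>
      match n with
      | 0 => rw [hx0, ht0]; ring
      | 1 => rw [hx1, ht1]; norm_num
      | (m + 2) =>
        have hq := ih m (by omega)
        obtain ⟨h1, h2⟩ := key m
        rw [h1, h2]
        linear_combination hq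
  intro n
  obtain ⟨m, hm⟩ := Int.even_mul_succ_self (t n)
  have hx : ξ n * (ξ n + 1) = 2 * (5 * m) := by rw [q n, hm]; ring
  have ht : t n * (t n + 1) = 2 * m := by rw [hm]; ring
  unfold Tz
  rw [hx, ht, Int.mul_ediv_cancel_left _ (by norm_num), Int.mul_ediv_cancel_left _ (by norm_num)]
end

section
/- For k = 2 with t_n defined by t₀ = 0, t₁ = 2, t_{n+1} = 6·t_n − t_{n−1} + 2, the triangular numbers satisfy the recurrence T_{t_{n+1}} = 34·T_{t_n} − T_{t_{n−1}} + 3 for all n ≥ 1. -/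
lemma Tz_two (x : ℤ) : 2 * Tz x = x * (x + 1) := by
  unfold Tz
  exact Int.mul_ediv_cancel' (Int.even_mul_succ_self x).two_dvd

theorem stmt_16 (t : ℕ → ℤ)
    (ht0 : t 0 = 0) (ht1 : t 1 = 2)
    (htrec : ∀ n, t (n + 2) = 6 * t (n + 1) - t n + 2) :
    ∀ n, Tz (t (n + 2)) = 34 * Tz (t (n + 1)) - Tz (t n) + 3 := by
  have inv : ∀ n, (t n)^2 + (t (n+1))^2 - 6 * t n * t (n+1) - 2 * t n - 2 * t (n+1) = 0 := by
    intro n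
    induction n with
    | zero => rw [ht0, ht1]; ring
    | succ k ih =>
      rw [htrec k]
      linear_combination ih
  intro n
  have h2 : 2 * Tz (t (n+2)) = t (n+2) * (t (n+2) + 1) := Tz_two _
  have h1 : 2 * Tz (t (n+1)) = t (n+1) * (t (n+1) + 1) := Tz_two _
  have h0 : 2 * Tz (t n) = t n * (t n + 1) := Tz_two _
  have hr := htrec n
  have hi := inv n
  have key : 2 * Tz (t (n+2)) = 2 * (34 * Tz (t (n+1)) - Tz (t n) + 3) := by
    linear_combination h2 - 34 * h1 + h0 + 2 * hi +
      (t (n+2) + 6 * t (n+1) - t n + 3) * hr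
  omega
end
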